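/- Fix an integer k ≥ 2 and disjoint finite sets A, B with |A| = |B| = 2k; let P = A ∪ B. Let y' : P → ℝ and let S' ⊆ P be a minimizer of y'(S) − v̄(S) over all S ⊆ P. Let 𝒮(y') be the collection of all sets S* ⊆ P with |S*∩A| = k+1 and |S*∩B| = k−1 such that S' is not a minimizer of y'(S) − v_{S*}(S) over all S ⊆ P. Then |𝒮(y')| ≤ binom(2k, k+1). -/

import Mathlib

/-!
Call `S*` bad if `S'` stops being a minimizer once `v̄(S*) = 2k` is raised to `2k + 1/6`; then
`y'(S*) − v̄(S*)` lies within `1/6` of the minimum excess. Two bad sets that differ both on `A`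
and on `B` can exchange a point `x ∈ (S₁* \ S₂*) ∩ A` for a point `z ∈ (S₂* \ S₁*) ∩ B`: this keeps
the total weight, but turns `S₁*` into a balanced set, where `v̄` jumps by `1/2`, and `S₂*` into a
set of size `2k` with `v̄ = 2k`. One of the two new sets would then have excess below the minimum.
So any two bad sets share their `A`-part or their `B`-part, hence all of them share one of the
two parts, and the other part, a `(k+1)`- or `(k-1)`-subset of a `2k`-set, determines the bad set.
-/

open Classical

/-- The game `v̄`: `v̄(S) = 2k + 1/2` if `|S| > 2k` or `|S∩A| = |S∩B| = k`, else `|S|`. -/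
noncomputable def vbar {U : Type*} [DecidableEq U] (k : ℕ) (A B : Finset U)
    (S : Finset U) : ℝ :=
  if 2 * k < S.card ∨ ((S ∩ A).card = k ∧ (S ∩ B).card = k) then (2 * k : ℝ) + 1 / 2
  else (S.card : ℝ)

/-- The game `v_{S*}`: equals `v̄` except `v_{S*}(S*) = 2k + 1/6`. -/
noncomputable def vS {U : Type*} [DecidableEq U] (k : ℕ) (A B Sstar : Finset U)
    (S : Finset U) : ℝ :=
  if S = Sstar then (2 * k : ℝ) + 1 / 6 else vbar k A B S

open Finset

def IsMinExcess {U : Type*} (P : Finset U) (v : Finset U → ℝ) (y : U → ℝ) (S' : Finset U) :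
    Prop :=
  ∀ S ⊆ P, (∑ p ∈ S', y p) - v S' ≤ (∑ p ∈ S, y p) - v S

theorem IsMinExcess.sum_sub_lt_of_not {U : Type*} {P : Finset U} {v w : Finset U → ℝ}
    {y : U → ℝ} {S' S₀ : Finset U} (hmin : IsMinExcess P v y S')
    (hw : ∀ S, S ≠ S₀ → w S = v S) (hS₀ : v S₀ ≤ w S₀) (hnot : ¬ IsMinExcess P w y S') :
    (∑ p ∈ S₀, y p) - w S₀ < (∑ p ∈ S', y p) - v S' := by
  by_cases hS' : S' = S₀
  · subst hS'
    refine absurd (fun S hSP => ?_) hnot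
    by_cases hS : S = S'
    · rw [hS]
    · rw [hw S hS]
      linarith [hmin S hSP]
  · simp only [IsMinExcess, not_forall, not_le] at hnot
    obtain ⟨S, hSP, hlt⟩ := hnot
    rw [hw S' hS'] at hlt
    by_cases hS : S = S₀
    · rwa [hS] at hlt
    · rw [hw S hS] at hlt
      exact absurd (hmin S hSP) (not_le.2 hlt)

theorem Set.subsingleton_image_or_subsingleton_image {ι α β : Type*} {s : Set ι} {f : ι → α}
    {g : ι → β} (h : ∀ i ∈ s, ∀ j ∈ s, f i = f j ∨ g i = g j) :
    (f '' s).Subsingleton ∨ (g '' s).Subsingleton := by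
  refine or_iff_not_imp_left.2 fun hf => ?_
  obtain ⟨i, hi, j, hj, hij⟩ : ∃ i ∈ s, ∃ j ∈ s, f i ≠ f j := by
    simpa [Set.Subsingleton] using hf
  have hg : ∀ l ∈ s, g l = g i := by
    intro l hl
    by_contra hli
    have hlj : g l ≠ g j := by rwa [← (h i hi j hj).resolve_left hij]
    exact hij (((h l hl i hi).resolve_right hli).symm.trans ((h l hl j hj).resolve_right hlj))
  rintro _ ⟨a, ha, rfl⟩ _ ⟨b, hb, rfl⟩
  rw [hg a ha, hg b hb]

section Parts

variable {U : Type*} [DecidableEq U] {A B S T : Finset U}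

theorem inter_union_inter_of_subset_union (hS : S ⊆ A ∪ B) : S ∩ A ∪ S ∩ B = S := by
  rw [← inter_union_distrib_left, inter_eq_left.2 hS]

theorem card_inter_add_card_inter (hAB : Disjoint A B) (hS : S ⊆ A ∪ B) :
    #(S ∩ A) + #(S ∩ B) = #S := by
  rw [← card_union_of_disjoint (hAB.mono inter_subset_right inter_subset_right),
    inter_union_inter_of_subset_union hS]

theorem eq_of_inter_eq_of_inter_eq (hS : S ⊆ A ∪ B) (hT : T ⊆ A ∪ B) (hA : S ∩ A = T ∩ A)
    (hB : S ∩ B = T ∩ B) : S = T := by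
  rw [← inter_union_inter_of_subset_union hS, ← inter_union_inter_of_subset_union hT, hA, hB]

theorem card_le_max_choose_of_inter_eq_or_inter_eq {F : Finset (Finset U)} {a b : ℕ}
    (hF : ∀ S ∈ F, S ⊆ A ∪ B ∧ #(S ∩ A) = a ∧ #(S ∩ B) = b)
    (h : ∀ S ∈ F, ∀ T ∈ F, S ∩ A = T ∩ A ∨ S ∩ B = T ∩ B) :
    #F ≤ max ((#A).choose a) ((#B).choose b) := by
  rcases Set.subsingleton_image_or_subsingleton_image h with hA | hB
  · refine le_max_of_le_right ((card_powersetCard b B).symm ▸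
      card_le_card_of_injOn (· ∩ B) (fun S hS => ?_) fun S hS T hT hST => ?_)
    · exact mem_powersetCard.2 ⟨inter_subset_right, (hF S hS).2.2⟩
    · exact eq_of_inter_eq_of_inter_eq (hF S hS).1 (hF T hT).1
        (hA ⟨S, hS, rfl⟩ ⟨T, hT, rfl⟩) hST
  · refine le_max_of_le_left ((card_powersetCard a A).symm ▸
      card_le_card_of_injOn (· ∩ A) (fun S hS => ?_) fun S hS T hT hST => ?_)
    · exact mem_powersetCard.2 ⟨inter_subset_right, (hF S hS).2.1⟩
    · exact eq_of_inter_eq_of_inter_eq (hF S hS).1 (hF T hT).1 hST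
        (hB ⟨S, hS, rfl⟩ ⟨T, hT, rfl⟩)

end Parts

section Games

variable {U : Type*} [DecidableEq U] {k : ℕ} {A B S : Finset U}

theorem vbar_of_card_inter_eq (hA : #(S ∩ A) = k) (hB : #(S ∩ B) = k) :
    vbar k A B S = 2 * k + 1 / 2 :=
  if_pos (Or.inr ⟨hA, hB⟩)

theorem vbar_eq_card (hS : #S ≤ 2 * k) (hA : #(S ∩ A) ≠ k) : vbar k A B S = #S :=
  if_neg (by omega)

theorem vS_self (Sstar : Finset U) : vS k A B Sstar Sstar = 2 * k + 1 / 6 :=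
  if_pos rfl

theorem vS_of_ne {Sstar : Finset U} (h : S ≠ Sstar) : vS k A B Sstar S = vbar k A B S :=
  if_neg h

theorem vbar_of_card_inter_eq_add_one (hAB : Disjoint A B) (hS : S ⊆ A ∪ B)
    (hA : #(S ∩ A) = k + 1) (hB : #(S ∩ B) = k - 1) (hk : 1 ≤ k) : vbar k A B S = 2 * k := by
  have hcard := card_inter_add_card_inter hAB hS
  rw [vbar_eq_card (by omega) (by omega), ← hcard, hA, hB]
  push_cast [hk]
  ring

theorem exists_exchange_vbar_add (hAB : Disjoint A B) {S₁ S₂ : Finset U}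
    (h₁ : S₁ ⊆ A ∪ B) (h₂ : S₂ ⊆ A ∪ B) (h₁A : #(S₁ ∩ A) = k + 1) (h₁B : #(S₁ ∩ B) = k - 1)
    (h₂A : #(S₂ ∩ A) = k + 1) (h₂B : #(S₂ ∩ B) = k - 1)
    (hA : S₁ ∩ A ≠ S₂ ∩ A) (hB : S₁ ∩ B ≠ S₂ ∩ B) (y : U → ℝ) :
    ∃ T₁ ⊆ A ∪ B, ∃ T₂ ⊆ A ∪ B,
      (∑ p ∈ T₁, y p) + ∑ p ∈ T₂, y p = (∑ p ∈ S₁, y p) + ∑ p ∈ S₂, y p ∧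
      vbar k A B T₁ + vbar k A B T₂ = vbar k A B S₁ + vbar k A B S₂ + 1 / 2 := by
  obtain ⟨x, hx₁, hx₂⟩ : ∃ x ∈ S₁ ∩ A, x ∉ S₂ ∩ A :=
    not_subset.1 fun h => hA (eq_of_subset_of_card_le h (by rw [h₁A, h₂A]))
  obtain ⟨z, hz₂, hz₁⟩ : ∃ z ∈ S₂ ∩ B, z ∉ S₁ ∩ B :=
    not_subset.1 fun h => hB (eq_of_subset_of_card_le h (by rw [h₁B, h₂B])).symm
  rw [mem_inter] at hx₁ hz₂
  have hxB : x ∉ B := disjoint_left.1 hAB hx₁.2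
  have hzA : z ∉ A := disjoint_right.1 hAB hz₂.2
  have hk : 2 ≤ k := by
    have := card_pos.2 ⟨z, mem_inter.2 hz₂⟩
    omega
  have hx₂' : x ∉ S₂ := fun h => hx₂ (mem_inter.2 ⟨h, hx₁.2⟩)
  have hz₁' : z ∉ S₁ := fun h => hz₁ (mem_inter.2 ⟨h, hz₂.2⟩)
  refine ⟨insert z (S₁.erase x), insert_subset (h₂ hz₂.1) ((erase_subset _ _).trans h₁),
    insert x (S₂.erase z), insert_subset (h₁ hx₁.1) ((erase_subset _ _).trans h₂), ?_, ?_⟩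
  · rw [sum_insert (fun h => hz₁' (mem_of_mem_erase h)), sum_insert
      (fun h => hx₂' (mem_of_mem_erase h)), sum_erase_eq_sub hx₁.1, sum_erase_eq_sub hz₂.1]
    ring
  · have hT₁A : #(insert z (S₁.erase x) ∩ A) = k := by
      rw [insert_inter_of_notMem hzA, erase_inter, card_erase_of_mem (mem_inter.2 hx₁), h₁A]
      rfl
    have hT₁B : #(insert z (S₁.erase x) ∩ B) = k := by
      rw [insert_inter_of_mem hz₂.2, erase_inter,
        erase_eq_of_notMem (fun h => hxB (mem_inter.1 h).2), card_insert_of_notMem hz₁, h₁B]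
      omega
    have hT₂A : #(insert x (S₂.erase z) ∩ A) = k + 2 := by
      rw [insert_inter_of_mem hx₁.2, erase_inter,
        erase_eq_of_notMem (fun h => hzA (mem_inter.1 h).2), card_insert_of_notMem hx₂, h₂A]
    have hT₂ : #(insert x (S₂.erase z)) = 2 * k := by
      rw [card_insert_of_notMem (fun h => hx₂' (mem_of_mem_erase h)), card_erase_of_mem hz₂.1,
        ← card_inter_add_card_inter hAB h₂, h₂A, h₂B]
      omega
    rw [vbar_of_card_inter_eq hT₁A hT₁B, vbar_eq_card hT₂.le (by omega), hT₂,
      vbar_of_card_inter_eq_add_one hAB h₁ h₁A h₁B (by omega),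
      vbar_of_card_inter_eq_add_one hAB h₂ h₂A h₂B (by omega)]
    push_cast
    ring

theorem inter_eq_or_inter_eq_of_sum_excess_lt (hAB : Disjoint A B) {y : U → ℝ}
    {S' S₁ S₂ : Finset U} (hmin : IsMinExcess (A ∪ B) (vbar k A B) y S')
    (h₁ : S₁ ⊆ A ∪ B) (h₂ : S₂ ⊆ A ∪ B) (h₁A : #(S₁ ∩ A) = k + 1) (h₁B : #(S₁ ∩ B) = k - 1)
    (h₂A : #(S₂ ∩ A) = k + 1) (h₂B : #(S₂ ∩ B) = k - 1)
    (hlt : (∑ p ∈ S₁, y p) - vbar k A B S₁ + ((∑ p ∈ S₂, y p) - vbar k A B S₂) <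
      2 * ((∑ p ∈ S', y p) - vbar k A B S') + 1 / 2) :
    S₁ ∩ A = S₂ ∩ A ∨ S₁ ∩ B = S₂ ∩ B := by
  by_contra! ⟨hA, hB⟩
  obtain ⟨T₁, hT₁, T₂, hT₂, hsum, hv⟩ :=
    exists_exchange_vbar_add hAB h₁ h₂ h₁A h₁B h₂A h₂B hA hB y
  linarith [hmin T₁ hT₁, hmin T₂ hT₂]

end Games

theorem stmt6_general {U : Type*} [DecidableEq U] (k : ℕ) (hk : 2 ≤ k)
    (A B : Finset U) (hAB : Disjoint A B) (hA : A.card = 2 * k) (hB : B.card = 2 * k)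
    (P : Finset U) (hP : P = A ∪ B)
    (y' : U → ℝ) (S' : Finset U)
    (hmin : ∀ S ⊆ P,
      (∑ p ∈ S', y' p) - vbar k A B S' ≤ (∑ p ∈ S, y' p) - vbar k A B S) :
    (P.powerset.filter (fun Sstar =>
        (Sstar ∩ A).card = k + 1 ∧ (Sstar ∩ B).card = k - 1 ∧
        ¬ ∀ S ⊆ P,
          (∑ p ∈ S', y' p) - vS k A B Sstar S' ≤
            (∑ p ∈ S, y' p) - vS k A B Sstar S)).card
      ≤ (2 * k).choose (k + 1) := by
  subst hP
  set m := (∑ p ∈ S', y' p) - vbar k A B S'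
  set F := (A ∪ B).powerset.filter fun Sstar =>
    #(Sstar ∩ A) = k + 1 ∧ #(Sstar ∩ B) = k - 1 ∧
      ¬ ∀ S ⊆ A ∪ B, (∑ p ∈ S', y' p) - vS k A B Sstar S' ≤ (∑ p ∈ S, y' p) - vS k A B Sstar S
  have hbad : ∀ Sstar ∈ F, (Sstar ⊆ A ∪ B ∧ #(Sstar ∩ A) = k + 1 ∧ #(Sstar ∩ B) = k - 1) ∧
      (∑ p ∈ Sstar, y' p) - vbar k A B Sstar < m + 1 / 6 := by
    intro Sstar hS
    obtain ⟨hsub, hSA, hSB, hnot⟩ := by simpa only [F, mem_filter, mem_powerset] using hS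
    have hv := vbar_of_card_inter_eq_add_one hAB hsub hSA hSB (by omega)
    have hlt := IsMinExcess.sum_sub_lt_of_not hmin (fun S hS => vS_of_ne hS)
      (by rw [vS_self, hv]; norm_num) hnot
    rw [vS_self] at hlt
    exact ⟨⟨hsub, hSA, hSB⟩, by linarith⟩
  have hcard := card_le_max_choose_of_inter_eq_or_inter_eq (fun S hS => (hbad S hS).1)
    fun S hS T hT => inter_eq_or_inter_eq_of_sum_excess_lt hAB hmin (hbad S hS).1.1
      (hbad T hT).1.1 (hbad S hS).1.2.1 (hbad S hS).1.2.2 (hbad T hT).1.2.1 (hbad T hT).1.2.2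
      (by linarith [(hbad S hS).2, (hbad T hT).2])
  rwa [hA, hB, Nat.choose_symm_of_eq_add (show 2 * k = (k - 1) + (k + 1) by omega),
    max_self] at hcard

/-- If `S'` minimizes the excess `y'(S) − v̄(S)` over all `S ⊆ P`, then the
number of sets `S* ⊆ P` with `|S*∩A| = k+1`, `|S*∩B| = k−1` for which `S'` fails to be a
minimizer of `y'(S) − v_{S*}(S)` is at most `binom(2k, k+1)`. -/
theorem stmt6 {U : Type*} [DecidableEq U] (k : ℕ) (hk : 2 ≤ k)
    (A B : Finset U) (hAB : Disjoint A B) (hA : A.card = 2 * k) (hB : B.card = 2 * k)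
    (P : Finset U) (hP : P = A ∪ B)
    (y' : U → ℝ) (S' : Finset U) (hS'sub : S' ⊆ P)
    (hmin : ∀ S ⊆ P,
      (∑ p ∈ S', y' p) - vbar k A B S' ≤ (∑ p ∈ S, y' p) - vbar k A B S) :
    (P.powerset.filter (fun Sstar =>
        (Sstar ∩ A).card = k + 1 ∧ (Sstar ∩ B).card = k - 1 ∧
        ¬ ∀ S ⊆ P,
          (∑ p ∈ S', y' p) - vS k A B Sstar S' ≤
            (∑ p ∈ S, y' p) - vS k A B Sstar S)).card
      ≤ (2 * k).choose (k + 1) :=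
  stmt6_general k hk A B hAB hA hB P hP y' S' hmin
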